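/- arXiv:2206.14480 — 5 statements merged into one kernel-verified Lean document; each statement's English description precedes it below -/
import Mathlib

section
/- For any sequential plan π = ⟨a_1,...,a_m⟩ of ground actions over objects Ω = {0,...,N-1}, with each action of arity at most K, there exists an equivalent program in the index-based language (with K index variables z_1,...,z_K, each initialized to 0 and ranging over [0,N), and instructions z++ / z-- / apply a(z_{i1},...,z_{ik})) whose execution produces exactly the sequence of ground actions π. Hence the index-based representation preserves the space of sequential plans. -/
/-- Instructions of the index-based plan language: increment/decrement one of the
`K` index variables (each ranging over `Fin N`), or apply an action scheme with
its arguments instantiated by index variables. -/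
inductive Instr (A : Type) (arity : A → ℕ) (K N : ℕ) : Type where
  | inc (i : Fin K)
  | dec (i : Fin K)
  | apply (a : A) (args : Fin (arity a) → Fin K)

/-- A ground action: an action scheme instantiated with objects. -/
abbrev GroundAction (A : Type) (arity : A → ℕ) (N : ℕ) :=
  (a : A) × (Fin (arity a) → Fin N)

/-- Increment a `Fin N` value, capped at `N-1`. -/
def bump {N : ℕ} (x : Fin N) : Fin N :=
  if h : x.val + 1 < N then ⟨x.val + 1, h⟩ else x

/-- Decrement a `Fin N` value, floored at `0`. -/
def drop' {N : ℕ} (x : Fin N) : Fin N :=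
  ⟨x.val - 1, Nat.lt_of_le_of_lt (Nat.sub_le _ _) x.isLt⟩

/-- Executing a program (a list of instructions) from an index valuation
deterministically yields the list of emitted ground actions:
`Apply` emits the action instantiated by the current index values,
`Inc`/`Dec` emit nothing. -/
def run {A : Type} {arity : A → ℕ} {K N : ℕ} :
    List (Instr A arity K N) → (Fin K → Fin N) → List (GroundAction A arity N)
  | [], _ => []
  | .inc i :: rest, v => run rest (Function.update v i (bump (v i)))
  | .dec i :: rest, v => run rest (Function.update v i (drop' (v i)))
  | .apply a args :: rest, v => ⟨a, fun j => v (args j)⟩ :: run rest v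

/-!
Since `run` only reports emitted actions, a program fragment is specified by the valuation change
it effects in front of an arbitrary continuation. Using `inc`/`dec` alone one can move any index
valuation to any other, one coordinate at a time. Each ground action `⟨a, args⟩` of the plan is
then emitted by first moving to a valuation whose first `arity a` coordinates are `args` (possible
since `arity a ≤ K`) and applying `a` to the index variables `0, …, arity a - 1`.
-/

open Function

namespace Instr

variable {A : Type} {arity : A → ℕ} {K N : ℕ}

def Steers (p : List (Instr A arity K N)) (v w : Fin K → Fin N) : Prop :=
  ∀ rest, run (p ++ rest) v = run rest w

theorem steers_nil (v : Fin K → Fin N) : Steers ([] : List (Instr A arity K N)) v v :=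
  fun _ => rfl

theorem Steers.append {p q : List (Instr A arity K N)} {u v w : Fin K → Fin N}
    (hp : Steers p u v) (hq : Steers q v w) : Steers (p ++ q) u w := fun rest => by
  rw [List.append_assoc, hp, hq]

theorem steers_inc (v : Fin K → Fin N) (i : Fin K) :
    Steers [(inc i : Instr A arity K N)] v (update v i (bump (v i))) :=
  fun _ => rfl

theorem steers_dec (v : Fin K → Fin N) (i : Fin K) :
    Steers [(dec i : Instr A arity K N)] v (update v i (drop' (v i))) :=
  fun _ => rfl

theorem exists_steers_update_to_zero (hN : 0 < N) (v : Fin K → Fin N) (i : Fin K) (s : Fin N) :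
    ∃ p : List (Instr A arity K N), Steers p (update v i s) (update v i ⟨0, hN⟩) := by
  obtain ⟨n, hn⟩ := s
  induction n with
  | zero => exact ⟨[], steers_nil _⟩
  | succ n ih =>
    obtain ⟨p, hp⟩ := ih (by omega)
    have hdrop : drop' (⟨n + 1, hn⟩ : Fin N) = ⟨n, by omega⟩ := rfl
    refine ⟨dec i :: p, (steers_dec _ i).append ?_⟩
    simpa only [update_self, update_idem, hdrop] using hp

theorem exists_steers_update_from_zero (hN : 0 < N) (v : Fin K → Fin N) (i : Fin K) (t : Fin N) :
    ∃ p : List (Instr A arity K N), Steers p (update v i ⟨0, hN⟩) (update v i t) := by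
  obtain ⟨n, hn⟩ := t
  induction n with
  | zero => exact ⟨[], steers_nil _⟩
  | succ n ih =>
    obtain ⟨p, hp⟩ := ih (by omega)
    have hbump : bump (⟨n, by omega⟩ : Fin N) = ⟨n + 1, hn⟩ := by simp [bump, hn]
    refine ⟨p ++ [inc i], hp.append ?_⟩
    simpa only [update_self, update_idem, hbump] using
      steers_inc (A := A) (arity := arity) (update v i ⟨n, by omega⟩) i

theorem exists_steers_update (v : Fin K → Fin N) (i : Fin K) (t : Fin N) :
    ∃ p : List (Instr A arity K N), Steers p v (update v i t) := by
  obtain ⟨p, hp⟩ := exists_steers_update_to_zero (A := A) (arity := arity) t.pos v i (v i)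
  obtain ⟨q, hq⟩ := exists_steers_update_from_zero (A := A) (arity := arity) t.pos v i t
  rw [update_eq_self] at hp
  exact ⟨_, hp.append hq⟩

theorem exists_steers (v w : Fin K → Fin N) : ∃ p : List (Instr A arity K N), Steers p v w := by
  classical
  suffices ∀ s : Finset (Fin K), ∃ p : List (Instr A arity K N), Steers p v (s.piecewise w v) by
    simpa only [Finset.piecewise_univ] using this Finset.univ
  intro s
  induction s using Finset.induction_on with
  | empty => exact ⟨[], by simpa only [Finset.piecewise_empty] using steers_nil v⟩
  | insert i s _ ih =>
    obtain ⟨p, hp⟩ := ih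
    obtain ⟨q, hq⟩ := exists_steers_update (A := A) (arity := arity) (s.piecewise w v) i (w i)
    exact ⟨_, by simpa only [Finset.piecewise_insert] using hp.append hq⟩

theorem exists_run_eq (harity : ∀ a : A, arity a ≤ K) (π : List (GroundAction A arity N)) :
    ∀ v : Fin K → Fin N, ∃ prog : List (Instr A arity K N), run prog v = π := by
  induction π with
  | nil => exact fun _ => ⟨[], rfl⟩
  | cons act π ih =>
    intro v
    obtain ⟨a, args⟩ := act
    have hcast := Fin.castLE_injective (harity a)
    set w := extend (Fin.castLE (harity a)) args v
    obtain ⟨p, hp⟩ := exists_steers (A := A) (arity := arity) v w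
    obtain ⟨q, hq⟩ := ih w
    refine ⟨p ++ apply a (Fin.castLE (harity a)) :: q, ?_⟩
    rw [hp, run, hq, funext (hcast.extend_apply args v)]

end Instr

/-- For any sequential plan `π` of ground actions over `N > 0` objects, with each
action of arity at most `K`, there is a program in the index-based language whose
execution from the all-zero index valuation emits exactly `π`.  Hence the
index-based representation preserves the space of sequential plans. -/
theorem index_programs_preserve_sequential_plans
    (A : Type) (arity : A → ℕ) (K N : ℕ) (hN : 0 < N)
    (harity : ∀ a : A, arity a ≤ K)
    (π : List (GroundAction A arity N)) :
    ∃ prog : List (Instr A arity K N),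
      run prog (fun _ => ⟨0, hN⟩) = π :=
  Instr.exists_run_eq harity π _
end

section
/- The program 'for(i=0; i<N; i++){ for(j=0; j<N; j++){ if(v[i] < v[j]) swap(v[i], v[j]) } }' sorts any vector v of length N into increasing order, and performs at most N² comparisons. -/
/-!
During pass `i` (the inner loop over `j`), position `i` accumulates the running maximum of the
entries `0, …, j`, so after the pass it holds the maximum of the whole array. Swaps with `j ≥ i`
leave the prefix below `i` untouched, and a swap with `j < i` moves the current value at `i` into
slot `j`, where it fits between its neighbours, so the prefix below `i` stays sorted. Hence after pass `i` the
prefix `0, …, i` is sorted, and after the last pass the whole array is.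
-/

/-- One step of the double-loop sorting program: given the pair `(i, j)`,
compare `v i < v j` and swap the two entries if the comparison succeeds. -/
def sortStep {N : ℕ} (v : Fin N → ℤ) (p : Fin N × Fin N) : Fin N → ℤ :=
  if v p.1 < v p.2 then v ∘ Equiv.swap p.1 p.2 else v

/-- All pairs `(i, j) ∈ Fin N × Fin N` in lexicographic order: the iteration
order of `for(i=0;i<N;i++){ for(j=0;j<N;j++){ … } }`. -/
def lexPairs (N : ℕ) : List (Fin N × Fin N) :=
  (List.finRange N).flatMap fun i => (List.finRange N).map fun j => (i, j)

theorem List.foldl_finRange_induction {α : Type*} {n : ℕ} (f : α → Fin n → α)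
    (P : ℕ → α → Prop) (x : α) (h₀ : P 0 x)
    (hf : ∀ (i : Fin n) y, P i y → P (i + 1) (f y i)) :
    P n ((List.finRange n).foldl f x) := by
  rw [← Fin.foldl_eq_foldl_finRange]
  induction n generalizing x with
  | zero => exact h₀
  | succ n ih =>
    rw [Fin.foldl_succ_last]
    exact hf (Fin.last n) _ (ih (fun y i => f y i.castSucc) x h₀ fun i y => hf i.castSucc y)

theorem length_lexPairs (N : ℕ) : (lexPairs N).length = N * N := by
  simp [lexPairs, List.length_flatMap]

theorem exists_perm_foldl_sortStep {N : ℕ} (l : List (Fin N × Fin N)) (v : Fin N → ℤ) :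
    ∃ σ : Equiv.Perm (Fin N), l.foldl sortStep v = v ∘ σ := by
  induction l generalizing v with
  | nil => exact ⟨1, rfl⟩
  | cons p l ih =>
    rw [List.foldl_cons, sortStep]
    split_ifs
    · obtain ⟨σ, hσ⟩ := ih (v ∘ Equiv.swap p.1 p.2)
      exact ⟨σ.trans (Equiv.swap p.1 p.2), hσ⟩
    · exact ih v

section

open Set

variable {N : ℕ} {w : Fin N → ℤ} {i j : Fin N}

theorem sortStep_apply_of_ne {a : Fin N} (hi : a ≠ i) (hj : a ≠ j) :
    sortStep w (i, j) a = w a := by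
  unfold sortStep
  split_ifs <;> simp [Equiv.swap_apply_of_ne_of_ne hi hj]

theorem sortStep_apply_le_apply_left (h : ∀ a < j, w a ≤ w i) :
    ∀ a ≤ j, sortStep w (i, j) a ≤ sortStep w (i, j) i := by
  intro a ha
  unfold sortStep
  split_ifs with hlt
  · simp only [Function.comp_apply, Equiv.swap_apply_left, Equiv.swap_apply_def]
    split_ifs with hai haj
    · exact le_rfl
    · exact hlt.le
    · exact (h a (lt_of_le_of_ne ha haj)).trans hlt.le
  · rcases ha.lt_or_eq with ha | rfl
    · exact h a ha
    · exact not_lt.1 hlt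

theorem monotoneOn_sortStep_of_lt (hji : j < i) (hmono : MonotoneOn w (Iio i))
    (h : ∀ a < j, w a ≤ w i) : MonotoneOn (sortStep w (i, j)) (Iio i) := by
  unfold sortStep
  split_ifs with hlt
  · -- the old `w i` fits in slot `j`: above `w a` for `a < j`, below `w j ≤ w b` for `b > j`
    have hswap : ∀ c < i, (w ∘ Equiv.swap i j) c = if c = j then w i else w c := fun c hc => by
      by_cases hcj : c = j
      · simp [hcj]
      · simp [hcj, Equiv.swap_apply_of_ne_of_ne hc.ne hcj]
    intro a ha b hb hab
    rw [hswap a ha, hswap b hb]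
    split_ifs with haj hbj hbj
    · exact le_rfl
    · exact hlt.le.trans (hmono hji hb (haj ▸ hab))
    · exact h a (lt_of_le_of_ne (hbj ▸ hab) haj)
    · exact hmono ha hb hab
  · exact hmono

theorem eqOn_sortStep_of_le (hij : i ≤ j) : EqOn (sortStep w (i, j)) w (Iio i) :=
  fun _ ha => sortStep_apply_of_ne (ne_of_lt ha) (ne_of_lt (lt_of_lt_of_le ha hij))

def sortRow (w : Fin N → ℤ) (i : Fin N) : Fin N → ℤ :=
  (List.finRange N).foldl (fun w j => sortStep w (i, j)) w

theorem foldl_sortStep_lexPairs (v : Fin N → ℤ) :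
    (lexPairs N).foldl sortStep v = (List.finRange N).foldl sortRow v := by
  simp only [lexPairs, List.foldl_flatMap, List.foldl_map]
  rfl

theorem monotoneOn_sortRow (hmono : MonotoneOn w (Iio i)) : MonotoneOn (sortRow w i) (Iic i) := by
  obtain ⟨hmono', hmax⟩ := List.foldl_finRange_induction (fun w j => sortStep w (i, j))
    (fun m w => MonotoneOn w (Iio i) ∧ ∀ a : Fin N, (a : ℕ) < m → w a ≤ w i) w
    ⟨hmono, fun _ ha => absurd ha (Nat.not_lt_zero _)⟩ fun j u ⟨humono, hule⟩ => by
      have hle : ∀ a < j, u a ≤ u i := fun a ha => hule a ha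
      refine ⟨?_, fun a ha =>
        sortStep_apply_le_apply_left hle a (Fin.le_def.2 (Nat.lt_succ_iff.1 ha))⟩
      rcases lt_or_ge j i with hji | hij
      · exact monotoneOn_sortStep_of_lt hji humono hle
      · exact humono.congr (eqOn_sortStep_of_le hij).symm
  intro a ha b hb hab
  rcases (mem_Iic.1 hb).lt_or_eq with hb | rfl
  · exact hmono' (lt_of_le_of_lt hab hb) hb hab
  · exact hmax a a.isLt

end

/-- The program `for(i=0;i<N;i++){ for(j=0;j<N;j++){ if(v[i]<v[j])
swap(v[i],v[j]) } }` sorts any vector of length `N` into non-decreasing order: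
the result is a permutation of the input and is monotone; moreover it performs
exactly `N²` comparisons (one per iterated pair), hence at most `N²`. -/
theorem double_loop_sorts
    (N : ℕ) (v : Fin N → ℤ) :
    (∃ σ : Equiv.Perm (Fin N), (lexPairs N).foldl sortStep v = v ∘ σ) ∧
    Monotone ((lexPairs N).foldl sortStep v) ∧
    (lexPairs N).length = N * N := by
  refine ⟨exists_perm_foldl_sortStep _ v, ?_, length_lexPairs N⟩
  have hsorted := List.foldl_finRange_induction sortRow
    (fun k w => MonotoneOn w {a | (a : ℕ) < k}) v (fun _ ha => absurd ha (Nat.not_lt_zero _))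
    fun i w hmono => by
      have hIio : {a : Fin N | (a : ℕ) < i} = Set.Iio i := Set.ext fun a => by simp
      have hIic : {a : Fin N | (a : ℕ) < i + 1} = Set.Iic i := Set.ext fun a => by
        simp only [Set.mem_ofPred_eq, Set.mem_Iic, Fin.le_def]
        omega
      simp only [hIic]
      exact monotoneOn_sortRow (hIio ▸ hmono)
  rw [foldl_sortStep_lexPairs, ← monotoneOn_univ]
  simpa using hsorted
end

section
/- The program 'for(i=N-1; i≥0; i--){ if(i>j) swap(v[i], v[j]); if(j<N-1) j++ }' with j initialized to 0 reverses any vector v of length N. -/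
/-- One step of the reverse program, executed for loop counter `i`:
if `i > j` swap entries `i` and `j`; then if `j < N-1` increment `j`. -/
def revStep {N : ℕ} {α : Type} (st : (Fin N → α) × Fin N) (i : Fin N) :
    (Fin N → α) × Fin N :=
  let v := st.1
  let j := st.2
  let v' := if j.val < i.val then v ∘ Equiv.swap i j else v
  let j' : Fin N := if h : j.val + 1 < N then ⟨j.val + 1, h⟩ else j
  (v', j')

def stArr {N : ℕ} {α : Type} (v : Fin N → α) (t : ℕ) (k : Fin N) : α :=
  if (N - t ≤ k.val ∧ N - 1 < 2*k.val) ∨ (k.val < t ∧ 2*k.val < N-1)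
    then v k.rev else v k

lemma swap_arr (N t : ℕ) (α : Type) (v : Fin N → α) (ht : t < N) (hc : 2*t < N-1) :
    (stArr v t ∘ Equiv.swap ⟨N-1-t, by omega⟩ ⟨t, by omega⟩) = stArr v (t+1) := by
  funext k
  rcases eq_or_ne k ⟨N-1-t, by omega⟩ with hk | hk
  · subst hk
    simp only [Function.comp_apply, Equiv.swap_apply_left]
    rw [stArr, if_neg (by simp only [Fin.val_mk]; omega),
        stArr, if_pos (by simp only [Fin.val_mk]; omega)]
    congr 1
    simp only [Fin.rev, Fin.ext_iff, Fin.val_mk]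
    omega
  · rcases eq_or_ne k ⟨t, by omega⟩ with hk2 | hk2
    · subst hk2
      simp only [Function.comp_apply, Equiv.swap_apply_right]
      rw [stArr, if_neg (by simp only [Fin.val_mk]; omega),
          stArr, if_pos (by simp only [Fin.val_mk]; omega)]
      congr 1
      simp only [Fin.rev, Fin.ext_iff, Fin.val_mk]
      omega
    · simp only [Function.comp_apply, Equiv.swap_apply_of_ne_of_ne hk hk2]
      rw [stArr, stArr]
      have h1 : k.val ≠ N - 1 - t := fun h => hk (Fin.ext h)
      have h2 : k.val ≠ t := fun h => hk2 (Fin.ext h)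
      have := k.isLt
      by_cases hcond : (N - t ≤ k.val ∧ N - 1 < 2*k.val) ∨ (k.val < t ∧ 2*k.val < N-1)
      · rw [if_pos hcond, if_pos (by omega)]
      · rw [if_neg hcond, if_neg (by omega)]

lemma noswap_arr (N t : ℕ) (α : Type) (v : Fin N → α) (ht : t < N) (hc : ¬ 2*t < N-1) :
    stArr v t = stArr v (t+1) := by
  funext k
  rw [stArr, stArr]
  have := k.isLt
  by_cases hcond : (N - t ≤ k.val ∧ N - 1 < 2*k.val) ∨ (k.val < t ∧ 2*k.val < N-1)
  · rw [if_pos hcond, if_pos (by omega)]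
  · rw [if_neg hcond, if_neg (by omega)]

lemma step (N t : ℕ) (hN : 0 < N) (α : Type) (v : Fin N → α) (ht : t < N) :
    revStep (stArr v t, ⟨min t (N-1), by omega⟩) ⟨N-1-t, by omega⟩
      = (stArr v (t+1), ⟨min (t+1) (N-1), by omega⟩) := by
  have hmin : min t (N-1) = t := by omega
  have hj : (⟨min t (N-1), by omega⟩ : Fin N) = ⟨t, ht⟩ := Fin.ext (by simpa using hmin)
  rw [hj, revStep]
  simp only [Fin.val_mk]
  rw [Prod.mk.injEq]
  constructor
  · by_cases hc : 2*t < N-1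
    · rw [if_pos (by omega), swap_arr N t α v ht hc]
    · rw [if_neg (by omega), noswap_arr N t α v ht hc]
  · refine Fin.ext ?_
    by_cases h : t + 1 < N
    · rw [dif_pos h]; simp; omega
    · rw [dif_neg h]; simp; omega

lemma key (N : ℕ) (hN : 0 < N) (α : Type) (v : Fin N → α) :
    ∀ t, t ≤ N → ((List.finRange N).reverse.take t).foldl revStep (v, ⟨0, hN⟩)
      = (stArr v t, ⟨min t (N-1), by omega⟩) := by
  intro t
  induction t with
  | zero =>
    intro _
    simp only [List.take_zero, List.foldl_nil]
    refine Prod.ext ?_ (Fin.ext ?_)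
    · show v = stArr v 0
      funext k
      have := k.isLt
      rw [stArr, if_neg (by omega)]
    · simp
  | succ t ih =>
    intro ht
    have htN : t < N := ht
    have hlen : t < ((List.finRange N).reverse).length := by simpa using htN
    rw [List.take_succ, List.getElem?_eq_getElem hlen]
    have helt : ((List.finRange N).reverse)[t] = ⟨N - 1 - t, by omega⟩ := by
      rw [List.getElem_reverse]
      simp [List.getElem_finRange, Fin.ext_iff]
    rw [helt]
    simp only [Option.toList_some, List.foldl_append, List.foldl_cons, List.foldl_nil]
    rw [ih (by omega)]
    exact step N t hN α v htN

/-- The program `for(i=N-1; i≥0; i--){ if(i>j) swap(v[i],v[j]); if(j<N-1) j++ }`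
with `j` initialized to `0` reverses any vector of length `N`:
the final array at position `k` holds the original entry at position
`N-1-k` (i.e. `Fin.rev k`). -/
theorem reverse_program_reverses
    (N : ℕ) (hN : 0 < N) (α : Type) (v : Fin N → α) :
    ∀ k : Fin N,
      (((List.finRange N).reverse.foldl revStep (v, ⟨0, hN⟩)).1) k = v k.rev := by
  intro k
  have h := key N hN α v N le_rfl
  rw [List.take_of_length_le (by simp)] at h
  rw [h]
  show stArr v N k = v k.rev
  have := k.isLt
  by_cases hc : 2 * k.val = N - 1
  · rw [stArr, if_neg (by omega)]
    congr 1
    simp only [Fin.rev, Fin.ext_iff, Fin.val_mk]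
    omega
  · rw [stArr, if_pos (by omega)]
end

section
/- The Gripper generalized plan—iterating over all balls b: pick b in room A, move to room B, drop b, move back to room A—solves every Gripper instance: starting from a state where all NB balls are in room A and the gripper is empty, the final state has all balls in room B; the induced plan has length 4·NB, linear in the number of balls. -/
/-- A Gripper state: the robot's room (`false` = room A, `true` = room B),
the gripper's content, and the room of each of the `NB` balls. -/
structure GState (NB : ℕ) where
  robot : Bool
  grip : Option (Fin NB)
  loc : Fin NB → Bool

/-- Gripper actions. -/
inductive GAct (NB : ℕ) : Type where
  | pick (b : Fin NB)
  | move (r1 r2 : Bool)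
  | drop (b : Fin NB)

/-- Gripper action semantics: `none` when the precondition fails. -/
def gsem {NB : ℕ} : GAct NB → GState NB → Option (GState NB)
  | .pick b, s =>
    if s.grip = none ∧ s.loc b = s.robot then
      some { s with grip := some b }
    else none
  | .move r1 r2, s =>
    if s.robot = r1 then some { s with robot := r2 } else none
  | .drop b, s =>
    if s.grip = some b then
      some { s with grip := none, loc := Function.update s.loc b s.robot }
    else none

/-- Strict application of a sequential plan: fails if any action is
inapplicable in the state where it is applied. -/
def applyAll {NB : ℕ} : List (GAct NB) → GState NB → Option (GState NB)
  | [], s => some s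
  | a :: as, s => (gsem a s).bind (applyAll as)

/-- The Gripper generalized plan: for each ball `b`, pick `b` (in room A),
move to room B, drop `b`, and move back to room A. -/
def gripperPlan (NB : ℕ) : List (GAct NB) :=
  (List.finRange NB).flatMap fun b =>
    [GAct.pick b, GAct.move false true, GAct.drop b, GAct.move true false]


theorem applyAll_append {NB : ℕ} (l1 l2 : List (GAct NB)) (s : GState NB) :
    applyAll (l1 ++ l2) s = (applyAll l1 s).bind (applyAll l2) := by
  induction l1 generalizing s with
  | nil => simp [applyAll]
  | cons a as ih =>
    simp only [List.cons_append, applyAll]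
    cases gsem a s <;> simp [ih]

theorem key_s13 {NB : ℕ} (l : List (Fin NB)) (hnd : l.Nodup) (s : GState NB)
    (hr : s.robot = false) (hg : s.grip = none)
    (hl : ∀ b ∈ l, s.loc b = false) :
    applyAll (l.flatMap fun b =>
      [GAct.pick b, GAct.move false true, GAct.drop b, GAct.move true false]) s
      = some ⟨false, none, fun b => if b ∈ l then true else s.loc b⟩ := by
  induction l generalizing s with
  | nil =>
    simp only [List.flatMap_nil, applyAll, List.not_mem_nil, if_false]
    cases s; simp_all
  | cons a as ih =>
    have ha : s.loc a = false := hl a (by simp)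
    have hna : a ∉ as := (List.nodup_cons.mp hnd).1
    simp only [List.flatMap_cons, List.cons_append, List.nil_append]
    simp only [applyAll, gsem, hr, hg, ha, and_self, if_true, Option.bind_some, reduceIte,
      reduceCtorEq]
    rw [ih (List.nodup_cons.mp hnd).2]
    · congr 1
      cases s with
      | mk r g loc =>
        simp only [GState.mk.injEq, true_and]
        funext b
        simp only [List.mem_cons, Function.update]
        by_cases hba : b = a <;> by_cases hbs : b ∈ as <;> simp_all
    · rfl
    · rfl
    · intro b hb
      simp only [Function.update]
      have hba : b ≠ a := fun h => hna (h ▸ hb)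
      simp [hba, hl b (List.mem_cons_of_mem _ hb)]

/-- The Gripper generalized plan solves every Gripper instance: starting from
the state where all `NB` balls are in room A, the robot is in room A and the
gripper is empty, every action of the induced plan is applicable, the final
state has all balls in room B, and the plan has length `4·NB`, linear in the
number of balls. -/
theorem gripper_plan_correct (NB : ℕ) :
    (∃ sf : GState NB,
      applyAll (gripperPlan NB) ⟨false, none, fun _ => false⟩ = some sf ∧
      ∀ b : Fin NB, sf.loc b = true) ∧
    (gripperPlan NB).length = 4 * NB := by
  constructor
  · refine ⟨⟨false, none, fun b => if b ∈ List.finRange NB then true else false⟩, ?_, ?_⟩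
    · exact key_s13 (List.finRange NB) (List.nodup_finRange NB) _ rfl rfl (fun _ _ => rfl)
    · intro b; simp
  · simp [gripperPlan, List.length_flatMap, Function.comp_def, mul_comm]
end

section
/- The Blocksworld 'ontable' goal is achieved by the triple nested loop program that, for all triples (z1,z2,z3), attempts put_down(z2) then unstack(z2,z3): starting from any legal Blocksworld state with N blocks (hand empty), the state after execution has every block on the table. -/
/-- A Blocksworld state with `N` blocks: `below x` is the block that `x`
rests on (`none` if `x` is on the table or held), and `hold` is the block
currently held by the hand (if any). -/
structure BState (N : ℕ) where
  below : Fin N → Option (Fin N)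
  hold : Option (Fin N)

/-- A legal Blocksworld state: towers are finite (no cycles, witnessed by a
height function), and a held block rests on nothing and has nothing on it. -/
def Legal {N : ℕ} (s : BState N) : Prop :=
  (∃ h : Fin N → ℕ, ∀ x y, s.below x = some y → h x = h y + 1) ∧
  (∀ b, s.hold = some b → s.below b = none ∧ ∀ y, s.below y ≠ some b)

/-- `put_down(x)`: if the hand holds `x`, place `x` on the table and empty the
hand; otherwise the action is inapplicable and the state is unchanged. -/
def putdown {N : ℕ} (x : Fin N) (s : BState N) : BState N :=
  if s.hold = some x then { s with hold := none } else s

/-- `unstack(x,y)`: requires `on(x,y)`, `clear(x)` and `handempty`; the hand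
then holds `x` and `y` becomes clear.  Inapplicable actions are no-ops. -/
def unstack {N : ℕ} (x y : Fin N) (s : BState N) : BState N :=
  if s.hold = none ∧ s.below x = some y ∧ (∀ z, s.below z ≠ some x) then
    { below := Function.update s.below x none, hold := some x }
  else s

/-- All triples `(z1, z2, z3)` in lexicographic order: the iteration order of
the triple nested loop. -/
def lexTriples (N : ℕ) : List (Fin N × Fin N × Fin N) :=
  (List.finRange N).flatMap fun z1 =>
    (List.finRange N).flatMap fun z2 =>
      (List.finRange N).map fun z3 => (z1, z2, z3)

/-!
Split the loop into passes (one value of `z1`) and each pass into rows (one value of `z2`).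
Row `x` puts `x` down if it is held; if the hand is empty and `x` is clear on `y`, it unstacks
`x` at `z3 = y` and puts it down again at `z3 = y + 1`, so `x` stays in hand only when `y` is the
last block. While a block is held, every row but its own is a no-op.

The potential is the number of stacked blocks, plus one if the hand holds some `b` while a clear
stacked block `x < b` exists. A pass from a legal non-goal state lowers it or reaches the goal.
With the hand empty, the rows before the least clear stacked block `c` do nothing and row `c`
takes `c` off its tower; if `c` stays in hand, no clear stacked block precedes it. With `b` in
hand, row `b` puts `b` down, which pays for the extra one if it was counted, and otherwise the
least clear stacked block lies after `b` and is removed later in the same pass. Initially a block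
of minimal height is on the table, so the potential is below `N` and `N` passes reach the goal.
-/

theorem List.foldl_eq_foldl_filter_of_fixed {α σ : Type*} [LinearOrder α] {f : σ → α → σ}
    {l : List α} {a : α} {s : σ} (hl : l.Pairwise (· < ·)) (ha : a ∈ l)
    (hfix : ∀ x ∈ l, x < a → f s x = s) :
    l.foldl f s = (l.filter (a < ·)).foldl f (f s a) := by
  induction l with
  | nil => simp at ha
  | cons x t ih =>
    rw [List.pairwise_cons] at hl
    obtain rfl | hat := List.mem_cons.mp ha
    · rw [List.foldl_cons, List.filter_cons_of_neg (by simp),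
        List.filter_eq_self.mpr (fun y hy => by simpa using hl.1 y hy)]
    · have hxa : x < a := hl.1 a hat
      rw [List.foldl_cons, hfix x List.mem_cons_self hxa,
        List.filter_cons_of_neg (by simpa using hxa.le)]
      exact ih hl.2 hat fun y hy => hfix y (List.mem_cons_of_mem _ hy)

namespace BState

variable {N : ℕ}

def Clear (s : BState N) (x : Fin N) : Prop := ∀ z, s.below z ≠ some x

def ClearStacked (s : BState N) (x : Fin N) : Prop := s.below x ≠ none ∧ s.Clear x

def IsGoal (s : BState N) : Prop := s.hold = none ∧ ∀ x, s.below x = none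

open Finset in
def numStacked (s : BState N) : ℕ := #{x | s.below x ≠ none}

def HeldAfterClearStacked (s : BState N) : Prop :=
  ∃ b, s.hold = some b ∧ ∃ x, s.ClearStacked x ∧ x < b

open Classical in
noncomputable def potential (s : BState N) : ℕ :=
  s.numStacked + if s.HeldAfterClearStacked then 1 else 0

def act (x y : Fin N) (s : BState N) : BState N := unstack x y (putdown x s)

def row (x : Fin N) (s : BState N) : BState N := (List.finRange N).foldl (fun s y => act x y s) s

def pass (s : BState N) : BState N := (List.finRange N).foldl (fun s x => row x s) s

theorem foldl_lexTriples (s : BState N) :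
    (lexTriples N).foldl (fun s t => unstack t.2.1 t.2.2 (putdown t.2.1 s)) s = pass^[N] s := by
  simp only [lexTriples, List.foldl_flatMap, List.foldl_map]
  rw [List.foldl_const, List.length_finRange]
  rfl

variable {s : BState N} {x y b : Fin N}

theorem act_of_hold_ne (hb : s.hold = some b) (hx : b ≠ x) : act x y s = s := by
  simp [act, putdown, unstack, hb, hx]

theorem act_of_hold_none (hh : s.hold = none) (h : ¬(s.below x = some y ∧ s.Clear x)) :
    act x y s = s := by
  simp only [act, putdown, hh, reduceCtorEq, if_false, unstack, true_and]
  exact if_neg h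

theorem act_of_hold_self (hh : s.hold = some x) (hx : s.below x = none) :
    act x y s = { s with hold := none } := by
  simp [act, putdown, unstack, hh, hx]

theorem act_eq_unstacked (hh : s.hold = none) (hy : s.below x = some y) (hx : s.Clear x) :
    act x y s = ⟨Function.update s.below x none, some x⟩ := by
  simp only [act, putdown, hh, reduceCtorEq, if_false, unstack, true_and]
  exact if_pos ⟨hy, hx⟩

theorem act_of_isGoal (hs : s.IsGoal) : act x y s = s :=
  act_of_hold_none hs.1 fun h => by simp [hs.2 x] at h

theorem legal_putdown (hs : Legal s) : Legal (putdown x s) := by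
  unfold putdown
  split_ifs
  exacts [⟨hs.1, by simp⟩, hs]

theorem legal_unstack (hs : Legal s) : Legal (unstack x y s) := by
  unfold unstack
  split_ifs with h
  · obtain ⟨⟨f, hf⟩, -⟩ := hs
    refine ⟨⟨f, fun a c hac => hf a c ?_⟩, ?_⟩
    · by_cases hax : a = x
      · simp [hax] at hac
      · simpa [hax] using hac
    · rintro b ⟨⟩
      refine ⟨by simp, fun z => ?_⟩
      by_cases hzx : z = x
      · simp [hzx]
      · simpa [hzx] using h.2.2 z
  · exact hs

theorem legal_act (hs : Legal s) : Legal (act x y s) :=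
  legal_unstack (legal_putdown hs)

theorem numStacked_eq_zero : s.numStacked = 0 ↔ ∀ x, s.below x = none := by
  simp [numStacked, Finset.filter_eq_empty_iff]

theorem exists_clearStacked (hs : Legal s) (h : s.numStacked ≠ 0) : ∃ c, s.ClearStacked c := by
  obtain ⟨f, hf⟩ := hs.1
  obtain ⟨c, hc, hmax⟩ := Finset.exists_max_image _ f (Finset.card_ne_zero.mp h)
  refine ⟨c, by simpa using hc, fun z hz => ?_⟩
  have := hmax z (by simp [hz])
  have := hf z c hz
  omega

theorem exists_min_clearStacked (hs : Legal s) (h : s.numStacked ≠ 0) :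
    ∃ c, s.ClearStacked c ∧ ∀ x, s.ClearStacked x → c ≤ x := by
  obtain ⟨c, hc, hmin⟩ :=
    wellFounded_lt.has_min {x | s.ClearStacked x} (exists_clearStacked hs h)
  exact ⟨c, hc, fun x hx => not_lt.mp (hmin x hx)⟩

theorem numStacked_lt (hs : Legal s) (x : Fin N) : s.numStacked < N := by
  obtain ⟨f, hf⟩ := hs.1
  obtain ⟨z, -, hmin⟩ := Finset.exists_min_image Finset.univ f ⟨x, Finset.mem_univ x⟩
  have hz : s.below z = none := by
    by_contra hz
    obtain ⟨y, hy⟩ := Option.ne_none_iff_exists'.mp hz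
    have := hmin y (Finset.mem_univ y)
    have := hf z y hy
    omega
  have := Finset.card_lt_card <| (Finset.filter_ssubset (p := fun y => s.below y ≠ none)).mpr
    ⟨z, Finset.mem_univ z, not_not.mpr hz⟩
  simpa [numStacked] using this

theorem potential_of_hold_none (hh : s.hold = none) : s.potential = s.numStacked := by
  simp [potential, HeldAfterClearStacked, hh]

theorem potential_putdown_le : (putdown x s).potential ≤ s.potential := by
  unfold putdown
  split_ifs
  · rw [potential_of_hold_none rfl]
    exact Nat.le_add_right _ _
  · rfl

theorem numStacked_update_add_one (hx : s.below x ≠ none) :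
    numStacked ⟨Function.update s.below x none, b⟩ + 1 = s.numStacked := by
  have hmem : x ∈ Finset.univ.filter fun z => s.below z ≠ none := by simpa using hx
  rw [numStacked, numStacked, ← Finset.card_erase_add_one hmem]
  congr 2
  ext z
  by_cases hz : z = x <;> simp [hz]

theorem potential_unstack_le : (unstack x y s).potential ≤ s.potential := by
  unfold unstack
  split_ifs with h
  · have := numStacked_update_add_one (b := x) (by simp [h.2.1] : s.below x ≠ none)
    rw [potential, potential_of_hold_none h.1]
    split_ifs <;> omega
  · rfl

theorem potential_act_le : (act x y s).potential ≤ s.potential :=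
  potential_unstack_le.trans potential_putdown_le

section Fold

variable {α : Type*} {f : BState N → α → BState N}

theorem legal_foldl (hf : ∀ t a, Legal t → Legal (f t a)) (l : List α) (hs : Legal s) :
    Legal (l.foldl f s) :=
  List.foldlRecOn l f hs fun t ht a _ => hf t a ht

theorem potential_foldl_le (hf : ∀ t a, (f t a).potential ≤ t.potential) (l : List α) :
    (l.foldl f s).potential ≤ s.potential :=
  List.foldlRecOn (motive := fun t => t.potential ≤ s.potential) l f le_rfl
    fun t ht a _ => (hf t a).trans ht

end Fold

theorem row_of_isGoal (hs : s.IsGoal) : row x s = s :=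
  List.foldl_fixed' (fun _ => act_of_isGoal hs) _

theorem row_of_hold_ne (hb : s.hold = some b) (hx : b ≠ x) : row x s = s :=
  List.foldl_fixed' (fun _ => act_of_hold_ne hb hx) _

theorem row_of_not_clearStacked (hh : s.hold = none) (hx : ¬s.ClearStacked x) : row x s = s :=
  List.foldl_fixed' (fun _ => act_of_hold_none hh fun h =>
    hx ⟨Option.ne_none_iff_exists'.mpr ⟨_, h.1⟩, h.2⟩) _

theorem row_of_hold_self (hh : s.hold = some x) (hx : s.below x = none) :
    row x s = { s with hold := none } := by
  obtain ⟨n, rfl⟩ : ∃ n, N = n + 1 := Nat.exists_eq_add_one_of_ne_zero x.pos.ne'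
  rw [row, List.finRange_succ, List.foldl_cons, act_of_hold_self hh hx]
  exact List.foldl_fixed' (fun _ => act_of_hold_none rfl (by simp [hx])) _

theorem legal_row (hs : Legal s) : Legal (row x s) :=
  legal_foldl (fun _ _ => legal_act) _ hs

theorem potential_row_le : (row x s).potential ≤ s.potential :=
  potential_foldl_le (fun _ _ => potential_act_le) _

theorem ClearStacked.of_update {c : Fin N} (hy : s.below c = some y)
    (hx : ClearStacked ⟨Function.update s.below c none, b⟩ x) (hxy : x ≠ y) :
    s.ClearStacked x := by
  have hxc : x ≠ c := by rintro rfl; exact hx.1 (Function.update_self _ _ _)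
  refine ⟨by simpa [hxc] using hx.1, fun z => ?_⟩
  by_cases hzc : z = c
  · simp [hzc, hy, Ne.symm hxy]
  · simpa [hzc] using hx.2 z

theorem potential_row_lt {c : Fin N} (hh : s.hold = none) (hc : s.ClearStacked c)
    (hmin : ∀ x, s.ClearStacked x → c ≤ x) : (row c s).potential < s.potential := by
  obtain ⟨y, hy⟩ := Option.ne_none_iff_exists'.mp hc.1
  have hfix : ∀ z ∈ List.finRange N, z < y → act c z s = s := fun z _ hz =>
    act_of_hold_none hh fun h => hz.ne' (Option.some_injective _ (hy ▸ h.1))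
  rw [row, List.foldl_eq_foldl_filter_of_fixed (List.pairwise_lt_finRange N)
    (List.mem_finRange y) hfix, act_eq_unstacked hh hy hc.2, potential_of_hold_none hh]
  set v : BState N := ⟨Function.update s.below c none, some c⟩
  have hv : v.numStacked + 1 = s.numStacked := numStacked_update_add_one hc.1
  cases hL : (List.finRange N).filter (y < ·) with
  | nil =>
    have hyc : ¬y < c := by simpa using List.filter_eq_nil_iff.mp hL c (List.mem_finRange c)
    have : ¬v.HeldAfterClearStacked := by
      rintro ⟨b, ⟨⟩, x, hx, hxc⟩
      by_cases hxy : x = y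
      · exact hyc (hxy ▸ hxc)
      · exact (hmin x (hx.of_update hy hxy)).not_gt hxc
    rw [List.foldl_nil, potential, if_neg this]
    omega
  | cons y' L =>
    rw [List.foldl_cons, act_of_hold_self rfl (Function.update_self _ _ _)]
    calc _ ≤ ({ v with hold := none } : BState N).potential :=
          potential_foldl_le (fun _ _ => potential_act_le) L
      _ = v.numStacked := potential_of_hold_none rfl
      _ < s.numStacked := by omega

theorem legal_pass (hs : Legal s) : Legal (pass s) :=
  legal_foldl (fun _ _ => legal_row) _ hs

theorem pass_of_isGoal (hs : s.IsGoal) : pass s = s :=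
  List.foldl_fixed' (fun _ => row_of_isGoal hs) _

theorem pass_of_hold (hh : s.hold = some b) (hb : s.below b = none) :
    pass s = ((List.finRange N).filter (b < ·)).foldl (fun s x => row x s)
      { s with hold := none } := by
  rw [pass, List.foldl_eq_foldl_filter_of_fixed (List.pairwise_lt_finRange N)
    (List.mem_finRange b) fun x _ hx => row_of_hold_ne hh hx.ne', row_of_hold_self hh hb]

theorem potential_foldl_row_lt {l : List (Fin N)} {c : Fin N} (hl : l.Pairwise (· < ·))
    (hcl : c ∈ l) (hh : s.hold = none) (hc : s.ClearStacked c)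
    (hmin : ∀ x, s.ClearStacked x → c ≤ x) :
    (l.foldl (fun s x => row x s) s).potential < s.potential := by
  rw [List.foldl_eq_foldl_filter_of_fixed hl hcl fun x _ hx =>
    row_of_not_clearStacked hh fun hx' => (hmin x hx').not_gt hx]
  exact (potential_foldl_le (fun _ _ => potential_row_le) _).trans_lt
    (potential_row_lt hh hc hmin)

theorem potential_pass_lt_of_hold_none (hs : Legal s) (hh : s.hold = none)
    (h0 : s.numStacked ≠ 0) : (pass s).potential < s.potential := by
  obtain ⟨c, hc, hmin⟩ := exists_min_clearStacked hs h0
  exact potential_foldl_row_lt (List.pairwise_lt_finRange N) (List.mem_finRange c) hh hc hmin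

theorem isGoal_pass_or_potential_lt_of_hold (hs : Legal s) (hh : s.hold = some b) :
    (pass s).IsGoal ∨ (pass s).potential < s.potential := by
  rw [pass_of_hold hh (hs.2 b hh).1]
  set w : BState N := { s with hold := none }
  have hw : w.potential = s.numStacked := potential_of_hold_none rfl
  by_cases hp : s.HeldAfterClearStacked
  · refine Or.inr ((potential_foldl_le (fun _ _ => potential_row_le) _).trans_lt ?_)
    rw [hw, potential, if_pos hp]
    omega
  by_cases h0 : s.numStacked = 0
  · have hwd : w.IsGoal := ⟨rfl, numStacked_eq_zero.mp h0⟩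
    refine Or.inl ?_
    rwa [List.foldl_fixed' fun _ => row_of_isGoal hwd]
  obtain ⟨c, hc, hmin⟩ := exists_min_clearStacked hs h0
  have hbc : b < c := lt_of_le_of_ne (not_lt.mp fun hcb => hp ⟨b, hh, c, hc, hcb⟩)
    (by rintro rfl; exact hc.1 (hs.2 b hh).1)
  have hcw : w.ClearStacked c := hc
  have hminw : ∀ x, w.ClearStacked x → c ≤ x := hmin
  have hsorted : ((List.finRange N).filter (b < ·)).Pairwise (· < ·) :=
    (List.pairwise_lt_finRange N).filter _
  have hcmem : c ∈ (List.finRange N).filter (b < ·) :=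
    List.mem_filter.mpr ⟨List.mem_finRange c, decide_eq_true hbc⟩
  refine Or.inr ((potential_foldl_row_lt hsorted hcmem rfl hcw hminw).trans_eq ?_)
  rw [hw, potential, if_neg hp, add_zero]

theorem isGoal_pass_or_potential_lt (hs : Legal s) (hnd : ¬s.IsGoal) :
    (pass s).IsGoal ∨ (pass s).potential < s.potential := by
  cases hh : s.hold with
  | none => exact Or.inr (potential_pass_lt_of_hold_none hs hh
      fun h0 => hnd ⟨hh, numStacked_eq_zero.mp h0⟩)
  | some b => exact isGoal_pass_or_potential_lt_of_hold hs hh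

theorem isGoal_iterate_pass (hs : Legal s) (n : ℕ) (h : s.IsGoal ∨ s.potential < n) :
    (pass^[n] s).IsGoal := by
  induction n generalizing s with
  | zero => simpa using h
  | succ n ih =>
    rw [Function.iterate_succ_apply]
    by_cases hd : s.IsGoal
    · rw [pass_of_isGoal hd]
      exact ih hs (Or.inl hd)
    · have := h.resolve_left hd
      exact ih (legal_pass hs)
        ((isGoal_pass_or_potential_lt hs hd).imp_right fun _ => by omega)

end BState

/-- Executing the triple-nested-loop generalized plan, which for every triple
`(z1, z2, z3)` attempts `put_down(z2)` and then `unstack(z2, z3)`, from any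
legal Blocksworld state with the hand empty, leaves every block on the table
(and the hand empty). -/
theorem ontable_program_correct
    (N : ℕ) (s0 : BState N) (hleg : Legal s0) (hhand : s0.hold = none) :
    let sf := (lexTriples N).foldl
      (fun s t => unstack t.2.1 t.2.2 (putdown t.2.1 s)) s0
    sf.hold = none ∧ ∀ x : Fin N, sf.below x = none := by
  intro sf
  rw [show sf = BState.pass^[N] s0 from BState.foldl_lexTriples s0]
  refine BState.isGoal_iterate_pass hleg N ?_
  rcases Nat.eq_zero_or_pos N with rfl | hN
  · exact Or.inl ⟨hhand, fun x => x.elim0⟩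
  · exact Or.inr ((BState.potential_of_hold_none hhand).trans_lt
      (BState.numStacked_lt hleg ⟨0, hN⟩))
end
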